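/- Let α > 2, δ := 2/α, D > 0, λ > 0, μ > 0, p ∈ (0,1], m ∈ {2,4}, and set κ_q := Γ(1+q)·Γ(1−q). For s > 0 and t ≥ 0 define 𝓛_t(s) := exp(−λ·p·s^(δ/2)·∫_{t²·s^(−δ)}^∞ 1/((1 + u^(1/δ))·√(u − t²·s^(−δ))) du). Define p_m(θ) := exp(−m·λ·p·D·θ^(δ/2)·κ_{δ/2} − 2μ·∫₀^∞ (1 − 𝓛_t(θ·D^α)) dt) and p_m^T(θ) := exp(−m·λ·p·D·θ^(δ/2)·κ_{δ/2} − π·λ·p·μ·D²·θ^δ·κ_δ). Then lim_{θ→0⁺} (1 − p_m(θ)) / (1 − p_m^T(θ)) = 1. -/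

import Mathlib

open Real MeasureTheory Filter

/-- `κ_q := Γ(1+q)·Γ(1−q)`. -/
noncomputable def kappa (q : ℝ) : ℝ := Real.Gamma (1 + q) * Real.Gamma (1 - q)

/-- `𝓛_t(s)` from Corollary 1 of the paper. -/
noncomputable def Lfun (lam p δ t s : ℝ) : ℝ :=
  Real.exp (-(lam * p * s ^ (δ / 2) *
    ∫ u in Set.Ioi (t ^ 2 * s ^ (-δ)),
      1 / ((1 + u ^ (1 / δ)) * Real.sqrt (u - t ^ 2 * s ^ (-δ)))))

/-- The PLP-PPP success probability of the typical vehicle of order `m`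
(Corollary 1 of the paper). -/
noncomputable def pm (α D lam mu p m θ : ℝ) : ℝ :=
  Real.exp (-(m * lam * p * D * θ ^ ((2 / α) / 2) * kappa ((2 / α) / 2)) -
    2 * mu * ∫ t in Set.Ioi (0 : ℝ), (1 - Lfun lam p (2 / α) t (θ * D ^ α)))

/-- The TPPP success probability of the typical vehicle of order `m`
(equation (17) of the paper). -/
noncomputable def pmT (α D lam mu p m θ : ℝ) : ℝ :=
  Real.exp (-(m * lam * p * D * θ ^ ((2 / α) / 2) * kappa ((2 / α) / 2)) -
    π * lam * p * mu * D ^ 2 * θ ^ (2 / α) * kappa (2 / α))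

open Set

lemma slopeExp : Tendsto (fun x : ℝ => (1 - Real.exp x) / (-x)) (nhdsWithin 0 {(0:ℝ)}ᶜ) (nhds 1) := by
  have h : Tendsto (slope Real.exp 0) (nhdsWithin 0 {(0:ℝ)}ᶜ) (nhds 1) :=
    hasDerivAt_iff_tendsto_slope.mp (by simpa using Real.hasDerivAt_exp 0)
  refine h.congr fun x => ?_
  rw [slope_def_field, Real.exp_zero, sub_zero, div_neg, ← neg_div, neg_sub]

lemma phiInt {α : ℝ} (hα : 2 < α) :
    IntegrableOn (fun v => 1 / (Real.sqrt (1 + v ^ (α/2)) * Real.sqrt v)) (Set.Ioi (0:ℝ)) := by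
  have hmeas : Measurable (fun v : ℝ => 1 / (Real.sqrt (1 + v ^ (α/2)) * Real.sqrt v)) := by
    fun_prop
  have h1 : IntegrableOn (fun v => 1 / (Real.sqrt (1 + v ^ (α/2)) * Real.sqrt v)) (Set.Ioc (0:ℝ) 1) := by
    have hb : IntegrableOn (fun v : ℝ => v ^ (-(1:ℝ)/2)) (Set.Ioc (0:ℝ) 1) := by
      rw [integrableOn_Ioc_iff_integrableOn_Ioo]
      exact (intervalIntegral.integrableOn_Ioo_rpow_iff one_pos).mpr (by norm_num)
    refine hb.integrable.mono' hmeas.aestronglyMeasurable ?_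
    filter_upwards [ae_restrict_mem measurableSet_Ioc] with v hv
    have hv0 : 0 < v := hv.1
    have h1v : (1:ℝ) ≤ Real.sqrt (1 + v ^ (α/2)) := by
      calc (1:ℝ) = Real.sqrt 1 := Real.sqrt_one.symm
        _ ≤ _ := Real.sqrt_le_sqrt (le_add_of_nonneg_right (Real.rpow_nonneg hv0.le _))
    have hsv : 0 < Real.sqrt v := Real.sqrt_pos.mpr hv0
    rw [Real.norm_eq_abs, abs_of_nonneg (by positivity)]
    have hrw : v ^ (-(1:ℝ)/2) = (Real.sqrt v)⁻¹ := by
      rw [neg_div, Real.rpow_neg hv0.le, Real.sqrt_eq_rpow]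
    rw [hrw, one_div]
    apply inv_anti₀ hsv
    nlinarith
  have h2 : IntegrableOn (fun v => 1 / (Real.sqrt (1 + v ^ (α/2)) * Real.sqrt v)) (Set.Ioi (1:ℝ)) := by
    have hb : IntegrableOn (fun v : ℝ => v ^ (-(α/4) - 1/2)) (Set.Ioi (1:ℝ)) :=
      integrableOn_Ioi_rpow_of_lt (by nlinarith) one_pos
    refine hb.integrable.mono' hmeas.aestronglyMeasurable ?_
    filter_upwards [ae_restrict_mem measurableSet_Ioi] with v hv
    have hv0 : (0:ℝ) < v := lt_trans one_pos hv
    rw [Real.norm_eq_abs, abs_of_nonneg (by positivity)]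
    have key : Real.sqrt (v ^ (α/2)) * Real.sqrt v ≤ Real.sqrt (1 + v ^ (α/2)) * Real.sqrt v := by
      have := Real.sqrt_le_sqrt (le_add_of_nonneg_left (zero_le_one) : v ^ (α/2) ≤ 1 + v ^ (α/2))
      exact mul_le_mul_of_nonneg_right this (Real.sqrt_nonneg v)
    have hrw : v ^ (-(α/4) - 1/2) = 1 / (Real.sqrt (v ^ (α/2)) * Real.sqrt v) := by
      rw [Real.sqrt_eq_rpow, Real.sqrt_eq_rpow, ← Real.rpow_mul hv0.le,
        ← Real.rpow_add hv0]
      rw [eq_div_iff (by positivity), ← Real.rpow_add hv0,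
        show -(α/4) - 1/2 + (α/2 * (1/2) + 1/2) = (0:ℝ) by ring, Real.rpow_zero]
    rw [hrw]
    apply div_le_div_of_nonneg_left zero_le_one _ key
    positivity
  rw [show Set.Ioi (0:ℝ) = Set.Ioc (0:ℝ) 1 ∪ Set.Ioi (1:ℝ) from (Set.Ioc_union_Ioi_eq_Ioi zero_le_one).symm]
  exact h1.union h2

lemma shiftIndicator (h : ℝ → ℝ) (a : ℝ) :
    (Set.Ioi a).indicator (fun u => h (u - a)) = fun u => (Set.Ioi (0:ℝ)).indicator h (u - a) := by
  ext u
  by_cases hu : a < u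
  · simp [Set.indicator, Set.mem_Ioi, hu, sub_pos.mpr hu]
  · simp [Set.indicator, Set.mem_Ioi, hu, fun h' => hu (sub_pos.mp h')]

lemma shiftIntegrableOn {h : ℝ → ℝ} {a : ℝ} (hi : IntegrableOn h (Set.Ioi (0:ℝ))) :
    IntegrableOn (fun u => h (u - a)) (Set.Ioi a) := by
  rw [← integrable_indicator_iff measurableSet_Ioi, shiftIndicator]
  exact ((integrable_indicator_iff measurableSet_Ioi).mpr hi).comp_sub_right a

lemma shiftIntegral (h : ℝ → ℝ) (a : ℝ) :
    ∫ u in Set.Ioi a, h (u - a) = ∫ v in Set.Ioi (0:ℝ), h v := by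
  rw [← integral_indicator measurableSet_Ioi, ← integral_indicator measurableSet_Ioi,
    shiftIndicator]
  exact integral_sub_right_eq_self ((Set.Ioi (0:ℝ)).indicator h) a

lemma Jbound {α : ℝ} (hα : 2 < α) {a : ℝ} (ha : 0 < a) :
    (∫ u in Set.Ioi a, 1 / ((1 + u ^ (α/2)) * Real.sqrt (u - a))) ≤
      a ^ (-(α/4)) * ∫ v in Set.Ioi (0:ℝ), 1 / (Real.sqrt (1 + v ^ (α/2)) * Real.sqrt v) := by
  set φ : ℝ → ℝ := fun v => 1 / (Real.sqrt (1 + v ^ (α/2)) * Real.sqrt v) with hφdef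
  have hφ := phiInt hα
  have hg : IntegrableOn (fun u => a ^ (-(α/4)) * φ (u - a)) (Set.Ioi a) :=
    (shiftIntegrableOn hφ).const_mul _
  have heq : ∫ u in Set.Ioi a, a ^ (-(α/4)) * φ (u - a)
      = a ^ (-(α/4)) * ∫ v in Set.Ioi (0:ℝ), φ v := by
    rw [MeasureTheory.integral_const_mul, shiftIntegral φ a]
  rw [← heq]
  refine integral_mono_of_nonneg ?_ hg ?_
  · filter_upwards [ae_restrict_mem measurableSet_Ioi] with u hu
    have hu0 : (0:ℝ) < u := lt_trans ha hu
    have : (0:ℝ) ≤ Real.sqrt (u - a) := Real.sqrt_nonneg _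
    positivity
  · filter_upwards [ae_restrict_mem measurableSet_Ioi] with u hu
    have hu0 : (0:ℝ) < u := lt_trans ha hu
    have hw : (0:ℝ) < u - a := sub_pos.mpr hu
    have hsw : (0:ℝ) < Real.sqrt (u - a) := Real.sqrt_pos.mpr hw
    have hX : (0:ℝ) < 1 + u ^ (α/2) := by positivity
    have hY : (0:ℝ) < Real.sqrt (1 + (u - a) ^ (α/2)) := Real.sqrt_pos.mpr (by positivity)
    have hapow : (0:ℝ) < a ^ (-(α/4)) := Real.rpow_pos_of_pos ha _
    -- key inequality
    have hkey : a ^ (α/4) * Real.sqrt (1 + (u - a) ^ (α/2)) ≤ 1 + u ^ (α/2) := by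
      have h1 : a ^ (α/4) = Real.sqrt (a ^ (α/2)) := by
        rw [Real.sqrt_eq_rpow, ← Real.rpow_mul ha.le]
        congr 1
        ring
      rw [h1, ← Real.sqrt_mul (Real.rpow_nonneg ha.le _)]
      have h2 : a ^ (α/2) * (1 + (u - a) ^ (α/2)) ≤ (1 + u ^ (α/2))^2 := by
        have ha' : a ^ (α/2) ≤ u ^ (α/2) :=
          Real.rpow_le_rpow ha.le (by linarith) (by linarith)
        have hw' : (u - a) ^ (α/2) ≤ u ^ (α/2) :=
          Real.rpow_le_rpow hw.le (by linarith) (by linarith)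
        have hu' : (0:ℝ) ≤ u ^ (α/2) := Real.rpow_nonneg hu0.le _
        have hw'' : (0:ℝ) ≤ (u - a) ^ (α/2) := Real.rpow_nonneg hw.le _
        nlinarith
      calc Real.sqrt (a ^ (α/2) * (1 + (u - a) ^ (α/2))) ≤ Real.sqrt ((1 + u ^ (α/2))^2) :=
            Real.sqrt_le_sqrt h2
        _ = 1 + u ^ (α/2) := Real.sqrt_sq hX.le
    have hYle : Real.sqrt (1 + (u - a) ^ (α/2)) ≤ a ^ (-(α/4)) * (1 + u ^ (α/2)) := by
      have := mul_le_mul_of_nonneg_left hkey hapow.le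
      calc Real.sqrt (1 + (u - a) ^ (α/2))
          = a ^ (-(α/4)) * (a ^ (α/4) * Real.sqrt (1 + (u - a) ^ (α/2))) := by
            rw [← mul_assoc, ← Real.rpow_add ha]; norm_num
        _ ≤ a ^ (-(α/4)) * (1 + u ^ (α/2)) := this
    show 1 / ((1 + u ^ (α/2)) * Real.sqrt (u - a)) ≤ a ^ (-(α/4)) * φ (u - a)
    rw [hφdef]
    simp only
    rw [mul_one_div, div_le_div_iff₀ (by positivity) (by positivity), one_mul]
    calc Real.sqrt (1 + (u - a) ^ (α/2)) * Real.sqrt (u - a)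
        ≤ (a ^ (-(α/4)) * (1 + u ^ (α/2))) * Real.sqrt (u - a) :=
          mul_le_mul_of_nonneg_right hYle hsw.le
      _ = a ^ (-(α/4)) * ((1 + u ^ (α/2)) * Real.sqrt (u - a)) := by ring


noncomputable def C1 (α : ℝ) : ℝ :=
  ∫ v in Set.Ioi (0:ℝ), 1 / (Real.sqrt (1 + v ^ (α/2)) * Real.sqrt v)

lemma C1_nonneg (α : ℝ) : 0 ≤ C1 α := by
  refine setIntegral_nonneg measurableSet_Ioi fun v hv => ?_
  have := Real.sqrt_nonneg (1 + v ^ (α/2))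
  have := Real.sqrt_nonneg v
  positivity

lemma one_div_two_div (α : ℝ) (hα0 : 0 < α) : (1:ℝ) / (2/α) = α/2 := one_div_div 2 α

lemma inner_nonneg {α : ℝ} (hα0 : 0 < α) {a : ℝ} (ha : 0 ≤ a) :
    0 ≤ ∫ u in Set.Ioi a, 1 / ((1 + u ^ (α/2)) * Real.sqrt (u - a)) := by
  refine setIntegral_nonneg measurableSet_Ioi fun u hu => ?_
  have hu0 : 0 < u := lt_of_le_of_lt ha hu
  have h1 : (0:ℝ) < 1 + u ^ (α/2) := by positivity
  have h2 : (0:ℝ) ≤ Real.sqrt (u - a) := Real.sqrt_nonneg _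
  positivity

lemma Lfun_nonneg_sub {α lam p s t : ℝ} (hα : 2 < α) (hlam : 0 < lam) (hp : 0 < p)
    (hs : 0 < s) (ht : 0 < t) : 0 ≤ 1 - Lfun lam p (2/α) t s := by
  have hα0 : (0:ℝ) < α := by linarith
  rw [Lfun]
  simp only [one_div_two_div α hα0]
  have ha : (0:ℝ) ≤ t ^ 2 * s ^ (-(2/α)) := by positivity
  set x := lam * p * s ^ ((2/α) / 2) *
      ∫ u in Set.Ioi (t ^ 2 * s ^ (-(2/α))), 1 / ((1 + u ^ (α/2)) * Real.sqrt (u - t ^ 2 * s ^ (-(2/α)))) with hxdef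
  have hx : 0 ≤ x := by
    have := inner_nonneg hα0 ha
    rw [hxdef]
    positivity
  have h1 : Real.exp (-x) ≤ 1 := Real.exp_le_one_iff.mpr (by linarith)
  linarith

lemma Lfun_le_one_sub (lam p δ t s : ℝ) : 1 - Lfun lam p δ t s ≤ 1 := by
  have := Real.exp_nonneg (-(lam * p * s ^ (δ / 2) *
    ∫ u in Set.Ioi (t ^ 2 * s ^ (-δ)),
      1 / ((1 + u ^ (1 / δ)) * Real.sqrt (u - t ^ 2 * s ^ (-δ)))))
  rw [Lfun]; linarith

lemma Lfun_key_bound {α lam p s t : ℝ} (hα : 2 < α) (hlam : 0 < lam) (hp : 0 < p)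
    (hs : 0 < s) (ht : 0 < t) :
    1 - Lfun lam p (2/α) t s ≤
      (lam * p * C1 α * s ^ (1/α + 1/2)) * t ^ (-(α/2)) := by
  have hα0 : (0:ℝ) < α := by linarith
  set a : ℝ := t ^ 2 * s ^ (-(2/α)) with hadef
  have ha : 0 < a := by positivity
  have hJ : (∫ u in Set.Ioi a, 1 / ((1 + u ^ (α/2)) * Real.sqrt (u - a))) ≤
      a ^ (-(α/4)) * C1 α := Jbound hα ha
  have hcoef : (0:ℝ) ≤ lam * p * s ^ ((2/α)/2) := by positivity
  have hx : lam * p * s ^ ((2/α)/2) * (∫ u in Set.Ioi a, 1 / ((1 + u ^ (α/2)) * Real.sqrt (u - a)))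
      ≤ lam * p * s ^ ((2/α)/2) * (a ^ (-(α/4)) * C1 α) :=
    mul_le_mul_of_nonneg_left hJ hcoef
  have hexp : 1 - Lfun lam p (2/α) t s ≤
      lam * p * s ^ ((2/α)/2) * (∫ u in Set.Ioi a, 1 / ((1 + u ^ (α/2)) * Real.sqrt (u - a))) := by
    rw [Lfun]
    simp only [one_div_two_div α hα0, ← hadef]
    set x := lam * p * s ^ ((2/α)/2) * (∫ u in Set.Ioi a, 1 / ((1 + u ^ (α/2)) * Real.sqrt (u - a)))
    have := Real.add_one_le_exp (-x)
    linarith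
  have hav : a ^ (-(α/4)) = t ^ (-(α/2)) * s ^ (1/2 : ℝ) := by
    rw [hadef, Real.mul_rpow (by positivity) (by positivity)]
    congr 1
    · rw [← Real.rpow_natCast t 2, ← Real.rpow_mul (by positivity : (0:ℝ) ≤ t)]
      congr 1
      push_cast
      ring
    · rw [← Real.rpow_mul hs.le]
      congr 1
      field_simp
      ring
  calc 1 - Lfun lam p (2/α) t s
      ≤ lam * p * s ^ ((2/α)/2) * (a ^ (-(α/4)) * C1 α) := le_trans hexp hx
    _ = (lam * p * C1 α * s ^ (1/α + 1/2)) * t ^ (-(α/2)) := by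
        rw [hav, show (2/α)/2 = 1/α by ring, Real.rpow_add hs]
        ring

lemma Ibound {α lam p : ℝ} (hα : 2 < α) (hlam : 0 < lam) (hp : 0 < p) :
    ∃ C : ℝ, 0 < C ∧ ∀ s : ℝ, 0 < s →
      (∫ t in Set.Ioi (0:ℝ), (1 - Lfun lam p (2/α) t s)) ≤
        C * s ^ ((1/α + 1/2) * (2/α)) := by
  have hα0 : (0:ℝ) < α := by linarith
  set B : ℝ := lam * p * (C1 α + 1) with hBdef
  have hB : 0 < B := by have := C1_nonneg α; rw [hBdef]; positivity
  set e : ℝ := 1/α + 1/2 with hedef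
  have hK : (0:ℝ) < 1 + 1/(α/2 - 1) := by
    have h0 : (0:ℝ) < α/2 - 1 := by linarith
    positivity
  refine ⟨B ^ (2/α) * (1 + 1/(α/2 - 1)),
    mul_pos (Real.rpow_pos_of_pos hB _) hK, fun s hs => ?_⟩
  set A : ℝ := B * s ^ e with hAdef
  have hA : 0 < A := by positivity
  set t₀ : ℝ := A ^ (2/α) with ht₀def
  have ht₀ : 0 < t₀ := Real.rpow_pos_of_pos hA _
  set g : ℝ → ℝ := fun t => min 1 (A * t ^ (-(α/2))) with hgdef
  have hgmeas : Measurable g := by fun_prop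
  -- g is integrable on the two pieces
  have hconst : IntegrableOn (fun _ : ℝ => (1:ℝ)) (Set.Ioc (0:ℝ) t₀) :=
    integrableOn_const measure_Ioc_lt_top.ne
  have hg1 : IntegrableOn g (Set.Ioc (0:ℝ) t₀) := by
    refine hconst.mono' hgmeas.aestronglyMeasurable ?_
    filter_upwards [ae_restrict_mem measurableSet_Ioc] with t htm
    have ht : 0 < t := htm.1
    have h0 : (0:ℝ) ≤ A * t ^ (-(α/2)) := by positivity
    rw [Real.norm_eq_abs, abs_of_nonneg (le_min zero_le_one h0)]
    exact min_le_left _ _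
  have hrint : IntegrableOn (fun t : ℝ => A * t ^ (-(α/2))) (Set.Ioi t₀) :=
    (integrableOn_Ioi_rpow_of_lt (by linarith) ht₀).const_mul A
  have hg2 : IntegrableOn g (Set.Ioi t₀) := by
    refine hrint.mono' hgmeas.aestronglyMeasurable ?_
    filter_upwards [ae_restrict_mem measurableSet_Ioi] with t htm
    have ht : 0 < t := lt_trans ht₀ htm
    have h0 : (0:ℝ) ≤ A * t ^ (-(α/2)) := by positivity
    rw [Real.norm_eq_abs, abs_of_nonneg (le_min zero_le_one h0)]
    exact min_le_right _ _
  have hgint : IntegrableOn g (Set.Ioi (0:ℝ)) := by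
    rw [show Set.Ioi (0:ℝ) = Set.Ioc (0:ℝ) t₀ ∪ Set.Ioi t₀ from
      (Set.Ioc_union_Ioi_eq_Ioi ht₀.le).symm]
    exact hg1.union hg2
  -- main comparison
  have hmain : (∫ t in Set.Ioi (0:ℝ), (1 - Lfun lam p (2/α) t s)) ≤
      ∫ t in Set.Ioi (0:ℝ), g t := by
    refine integral_mono_of_nonneg ?_ hgint ?_
    · filter_upwards [ae_restrict_mem measurableSet_Ioi] with t ht
      exact Lfun_nonneg_sub hα hlam hp hs ht
    · filter_upwards [ae_restrict_mem measurableSet_Ioi] with t ht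
      refine le_min (Lfun_le_one_sub lam p (2/α) t s) ?_
      refine le_trans (Lfun_key_bound hα hlam hp hs ht) ?_
      have h1 : lam * p * C1 α * s ^ e ≤ A := by
        rw [hAdef, hBdef]
        have : (0:ℝ) < s ^ e := Real.rpow_pos_of_pos hs _
        nlinarith [mul_pos (mul_pos hlam hp) this]
      exact mul_le_mul_of_nonneg_right h1 (Real.rpow_nonneg ht.le _)
  -- split the integral of g
  have hsplit : (∫ t in Set.Ioi (0:ℝ), g t) =
      (∫ t in Set.Ioc (0:ℝ) t₀, g t) + ∫ t in Set.Ioi t₀, g t := by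
    rw [show Set.Ioi (0:ℝ) = Set.Ioc (0:ℝ) t₀ ∪ Set.Ioi t₀ from
      (Set.Ioc_union_Ioi_eq_Ioi ht₀.le).symm]
    exact setIntegral_union (Set.Ioc_disjoint_Ioi le_rfl) measurableSet_Ioi hg1 hg2
  have hpiece1 : (∫ t in Set.Ioc (0:ℝ) t₀, g t) ≤ t₀ := by
    have : (∫ t in Set.Ioc (0:ℝ) t₀, g t) ≤ ∫ _ in Set.Ioc (0:ℝ) t₀, (1:ℝ) :=
      setIntegral_mono_on hg1 hconst
        measurableSet_Ioc (fun t _ => min_le_left _ _)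
    simp [Real.volume_Ioc, ENNReal.toReal_ofReal ht₀.le] at this
    rcases this with h | h <;> linarith
  have hpiece2 : (∫ t in Set.Ioi t₀, g t) ≤ A * (t₀ ^ (-(α/2) + 1) / (α/2 - 1)) := by
    have h1 : (∫ t in Set.Ioi t₀, g t) ≤ ∫ t in Set.Ioi t₀, A * t ^ (-(α/2)) :=
      setIntegral_mono_on hg2 hrint measurableSet_Ioi (fun t _ => min_le_right _ _)
    have h2 : (∫ t in Set.Ioi t₀, A * t ^ (-(α/2))) = A * (t₀ ^ (-(α/2) + 1) / (α/2 - 1)) := by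
      rw [MeasureTheory.integral_const_mul, integral_Ioi_rpow_of_lt (by linarith) ht₀]
      rw [neg_div, ← div_neg]
      ring_nf
    linarith [h1, h2.le]
  -- compute the bound
  have hval : t₀ + A * (t₀ ^ (-(α/2) + 1) / (α/2 - 1)) =
      B ^ (2/α) * (1 + 1/(α/2 - 1)) * s ^ (e * (2/α)) := by
    have h3 : A * t₀ ^ (-(α/2) + 1) = A ^ (2/α) := by
      rw [ht₀def, ← Real.rpow_mul hA.le]
      nth_rewrite 1 [show A = A ^ (1:ℝ) from (Real.rpow_one A).symm]
      rw [← Real.rpow_add hA]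
      congr 1
      field_simp
      ring
    have h5 : A ^ (2/α) = B ^ (2/α) * s ^ (e * (2/α)) := by
      rw [hAdef, Real.mul_rpow hB.le (Real.rpow_nonneg hs.le _), ← Real.rpow_mul hs.le]
    rw [ht₀def, mul_div_assoc', h3, h5]
    ring
  calc (∫ t in Set.Ioi (0:ℝ), (1 - Lfun lam p (2/α) t s)) ≤ ∫ t in Set.Ioi (0:ℝ), g t := hmain
    _ = (∫ t in Set.Ioc (0:ℝ) t₀, g t) + ∫ t in Set.Ioi t₀, g t := hsplit
    _ ≤ t₀ + A * (t₀ ^ (-(α/2) + 1) / (α/2 - 1)) := add_le_add hpiece1 hpiece2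
    _ = B ^ (2/α) * (1 + 1/(α/2 - 1)) * s ^ (e * (2/α)) := hval

lemma key_div (t i : ℝ) (ht : t ≠ 0) : (-t - i)/(-t) = 1 + i/t := by
  rw [show -t - i = -(t + i) by ring, neg_div_neg_eq, add_div, div_self ht]

lemma ratio_identity (ex ey x y t : ℝ) (hx : x ≠ 0) (hy : y ≠ 0) (ht : t ≠ 0)
    (hey : 1 - ey ≠ 0) :
    ((1 - ex)/(-x) * (x/(-t))) / ((1 - ey)/(-y) * (y/(-t))) = (1 - ex)/(1 - ey) := by
  field_simp


lemma kappa_pos {q : ℝ} (h0 : -1 < q) (h1 : q < 1) : 0 < kappa q :=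
  mul_pos (Real.Gamma_pos_of_pos (by linarith)) (Real.Gamma_pos_of_pos (by linarith))

lemma rpow_tendsto_zero {r : ℝ} (hr : 0 < r) :
    Tendsto (fun θ : ℝ => θ ^ r) (nhdsWithin 0 (Set.Ioi 0)) (nhds 0) := by
  have h := (Real.continuousAt_rpow_const 0 r (Or.inr hr.le)).tendsto
  rw [Real.zero_rpow hr.ne'] at h
  exact h.mono_left nhdsWithin_le_nhds

lemma mul_rpow_mul_tendsto_zero (c k : ℝ) {r : ℝ} (hr : 0 < r) :
    Tendsto (fun θ : ℝ => c * θ ^ r * k) (nhdsWithin 0 (Set.Ioi 0)) (nhds 0) := by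
  simpa using ((rpow_tendsto_zero hr).const_mul c).mul_const k

theorem stmt11 (α D lam mu p m : ℝ) (hα : 2 < α) (hD : 0 < D) (hlam : 0 < lam)
    (hmu : 0 < mu) (hp0 : 0 < p) (hp1 : p ≤ 1) (hm : m = 2 ∨ m = 4) :
    Tendsto (fun θ : ℝ =>
        (1 - pm α D lam mu p m θ) / (1 - pmT α D lam mu p m θ))
      (nhdsWithin 0 (Set.Ioi 0)) (nhds 1) := by
  have hα0 : (0:ℝ) < α := by linarith
  have hq : (0:ℝ) < (2/α)/2 := by positivity
  have hq1 : (2/α)/2 < 1 := by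
    rw [div_lt_one (by norm_num : (0:ℝ) < 2), div_lt_iff₀ hα0]
    linarith
  have hδ0 : (0:ℝ) < 2/α := by positivity
  have hδ1 : 2/α < 1 := by rw [div_lt_one hα0]; linarith
  have hδq : 0 < 2/α - (2/α)/2 := by linarith
  have hm0 : (0:ℝ) < m := by rcases hm with h | h <;> rw [h] <;> norm_num
  have hkq : 0 < kappa ((2/α)/2) := kappa_pos (by linarith) hq1
  have hkδ : 0 < kappa (2/α) := kappa_pos (by linarith) hδ1
  obtain ⟨C, hC, hCb⟩ := Ibound (α := α) hα hlam hp0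
  set b : ℝ := (1/α + 1/2) * (2/α) with hbdef
  have hb0 : 0 < b := by positivity
  have hbq : 0 < b - (2/α)/2 := by
    have hh : b - (2/α)/2 = 2/(α*α) := by rw [hbdef]; field_simp; ring
    rw [hh]; positivity
  set I : ℝ → ℝ := fun θ => ∫ t in Set.Ioi (0:ℝ), (1 - Lfun lam p (2/α) t (θ * D^α))
    with hIdef
  set X : ℝ → ℝ := fun θ =>
    -(m * lam * p * D * θ ^ ((2/α)/2) * kappa ((2/α)/2)) - 2 * mu * I θ with hXdef
  set Y : ℝ → ℝ := fun θ =>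
    -(m * lam * p * D * θ ^ ((2/α)/2) * kappa ((2/α)/2)) -
      π * lam * p * mu * D ^ 2 * θ ^ (2/α) * kappa (2/α) with hYdef
  set T : ℝ → ℝ := fun θ => m * lam * p * D * θ ^ ((2/α)/2) * kappa ((2/α)/2) with hTdef
  have hDα : (0:ℝ) < D ^ α := Real.rpow_pos_of_pos hD α
  have hT : ∀ θ : ℝ, 0 < θ → 0 < T θ := by
    intro θ hθ
    have h1 : 0 < θ ^ ((2/α)/2) := Real.rpow_pos_of_pos hθ _
    rw [hTdef]
    positivity
  have hI0 : ∀ θ : ℝ, 0 < θ → 0 ≤ I θ := by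
    intro θ hθ
    refine setIntegral_nonneg measurableSet_Ioi fun t ht => ?_
    exact Lfun_nonneg_sub hα hlam hp0 (by positivity) ht
  have hIb : ∀ θ : ℝ, 0 < θ → I θ ≤ (C * (D^α) ^ b) * θ ^ b := by
    intro θ hθ
    have h1 := hCb (θ * D^α) (by positivity)
    have h2 : (θ * D^α) ^ ((1/α + 1/2) * (2/α)) = θ ^ b * (D^α) ^ b := by
      rw [← hbdef, Real.mul_rpow hθ.le hDα.le]
    rw [h2] at h1
    calc I θ ≤ C * (θ ^ b * (D^α) ^ b) := h1
      _ = (C * (D^α) ^ b) * θ ^ b := by ring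
  have hXT : ∀ θ : ℝ, X θ = -(T θ) - 2 * mu * I θ := by
    intro θ; rw [hXdef, hTdef]
  have hYT : ∀ θ : ℝ,
      Y θ = -(T θ) - π * lam * p * mu * D ^ 2 * θ ^ (2/α) * kappa (2/α) := by
    intro θ; rw [hYdef, hTdef]
  have hXneg : ∀ θ : ℝ, 0 < θ → X θ < 0 := by
    intro θ hθ
    have h1 := hT θ hθ
    have h2 := hI0 θ hθ
    rw [hXT θ]
    nlinarith
  have hYneg : ∀ θ : ℝ, 0 < θ → Y θ < 0 := by
    intro θ hθ
    have h1 := hT θ hθ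
    have h2 : 0 < π * lam * p * mu * D ^ 2 * θ ^ (2/α) * kappa (2/α) := by
      have hπ := Real.pi_pos
      have h3 : 0 < θ ^ (2/α) := Real.rpow_pos_of_pos hθ _
      positivity
    rw [hYT θ]
    nlinarith
  -- limits to zero
  have hIlim : Tendsto I (nhdsWithin 0 (Set.Ioi 0)) (nhds 0) := by
    refine squeeze_zero' (g := fun θ : ℝ => (C * (D^α) ^ b) * θ ^ b) ?_ ?_ ?_
    · filter_upwards [self_mem_nhdsWithin] with θ hθ using hI0 θ hθ
    · filter_upwards [self_mem_nhdsWithin] with θ hθ using hIb θ hθ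
    · simpa using (rpow_tendsto_zero hb0).const_mul (C * (D^α) ^ b)
  have hlead : Tendsto (fun θ : ℝ => -(m * lam * p * D * θ ^ ((2/α)/2) * kappa ((2/α)/2)))
      (nhdsWithin 0 (Set.Ioi 0)) (nhds 0) := by
    simpa using (mul_rpow_mul_tendsto_zero (m * lam * p * D) (kappa ((2/α)/2)) hq).neg
  have hX0 : Tendsto X (nhdsWithin 0 (Set.Ioi 0)) (nhds 0) := by
    have h2 := hIlim.const_mul (2 * mu)
    simpa using hlead.sub h2
  have hY0 : Tendsto Y (nhdsWithin 0 (Set.Ioi 0)) (nhds 0) := by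
    have h2 := mul_rpow_mul_tendsto_zero (π * lam * p * mu * D ^ 2) (kappa (2/α)) hδ0
    simpa using hlead.sub h2
  -- nonzero constants
  have hθq : ∀ θ : ℝ, 0 < θ → θ ^ ((2/α)/2) ≠ 0 :=
    fun θ hθ => (Real.rpow_pos_of_pos hθ _).ne'
  -- ratio of X to leading term
  have hXq : Tendsto (fun θ => X θ / (-(T θ))) (nhdsWithin 0 (Set.Ioi 0)) (nhds 1) := by
    have hsq : Tendsto (fun θ => 2 * mu * I θ / T θ) (nhdsWithin 0 (Set.Ioi 0)) (nhds 0) := by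
      refine squeeze_zero' (g := fun θ : ℝ =>
        (2 * mu * (C * (D^α) ^ b) / (m * lam * p * D * kappa ((2/α)/2))) *
          θ ^ (b - (2/α)/2)) ?_ ?_ ?_
      · filter_upwards [self_mem_nhdsWithin] with θ hθ
        have := hI0 θ hθ
        exact div_nonneg (by nlinarith) (hT θ hθ).le
      · filter_upwards [self_mem_nhdsWithin] with θ hθ
        have hTθ := hT θ hθ
        have hnum : 2 * mu * I θ ≤ 2 * mu * ((C * (D^α) ^ b) * θ ^ b) :=
          mul_le_mul_of_nonneg_left (hIb θ hθ) (by positivity)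
        have h1 : 2 * mu * I θ / T θ ≤ 2 * mu * ((C * (D^α) ^ b) * θ ^ b) / T θ := by
          gcongr
        have hsplitb : θ ^ b = θ ^ (b - (2/α)/2) * θ ^ ((2/α)/2) := by
          rw [← Real.rpow_add hθ]; congr 1; ring
        have hnumeq : 2 * mu * ((C * (D^α) ^ b) * θ ^ b) =
            (2 * mu * (C * (D^α) ^ b) * θ ^ (b - (2/α)/2)) * θ ^ ((2/α)/2) := by
          rw [hsplitb]; ring
        have hTeq : T θ = (m * lam * p * D * kappa ((2/α)/2)) * θ ^ ((2/α)/2) := by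
          rw [hTdef]; ring
        have h2 : 2 * mu * ((C * (D^α) ^ b) * θ ^ b) / T θ =
            (2 * mu * (C * (D^α) ^ b) / (m * lam * p * D * kappa ((2/α)/2))) *
              θ ^ (b - (2/α)/2) := by
          rw [hnumeq, hTeq, mul_div_mul_right _ _ (hθq θ hθ)]
          ring
        exact h1.trans h2.le
      · simpa using (rpow_tendsto_zero hbq).const_mul
          (2 * mu * (C * (D^α) ^ b) / (m * lam * p * D * kappa ((2/α)/2)))
    have h := (tendsto_const_nhds (x := (1:ℝ))).add hsq
    have h' : Tendsto (fun θ => 1 + 2 * mu * I θ / T θ)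
        (nhdsWithin 0 (Set.Ioi 0)) (nhds 1) := by simpa using h
    refine Tendsto.congr' ?_ h'
    filter_upwards [self_mem_nhdsWithin] with θ hθ
    rw [hXT θ, key_div _ _ (hT θ hθ).ne']
  -- ratio of Y to leading term
  have hYq : Tendsto (fun θ => Y θ / (-(T θ))) (nhdsWithin 0 (Set.Ioi 0)) (nhds 1) := by
    have h := (tendsto_const_nhds (x := (1:ℝ))).add ((rpow_tendsto_zero hδq).const_mul
      (π * lam * p * mu * D ^ 2 * kappa (2/α) / (m * lam * p * D * kappa ((2/α)/2))))
    have h' : Tendsto (fun θ : ℝ => 1 +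
        (π * lam * p * mu * D ^ 2 * kappa (2/α) / (m * lam * p * D * kappa ((2/α)/2))) *
          θ ^ (2/α - (2/α)/2)) (nhdsWithin 0 (Set.Ioi 0)) (nhds 1) := by simpa using h
    refine Tendsto.congr' ?_ h'
    filter_upwards [self_mem_nhdsWithin] with θ hθ
    have hsplitb : θ ^ (2/α) = θ ^ (2/α - (2/α)/2) * θ ^ ((2/α)/2) := by
      rw [← Real.rpow_add hθ]; congr 1; ring
    have hnumeq : π * lam * p * mu * D ^ 2 * θ ^ (2/α) * kappa (2/α) =
        (π * lam * p * mu * D ^ 2 * kappa (2/α) * θ ^ (2/α - (2/α)/2)) * θ ^ ((2/α)/2) := by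
      rw [hsplitb]; ring
    have hTeq : T θ = (m * lam * p * D * kappa ((2/α)/2)) * θ ^ ((2/α)/2) := by
      rw [hTdef]; ring
    rw [hYT θ, key_div _ _ (hT θ hθ).ne', hnumeq, hTeq,
      mul_div_mul_right _ _ (hθq θ hθ)]
    ring_nf
  -- slope factors
  have hXslope : Tendsto (fun θ => (1 - Real.exp (X θ)) / (-(X θ)))
      (nhdsWithin 0 (Set.Ioi 0)) (nhds 1) := by
    refine slopeExp.comp (tendsto_nhdsWithin_iff.mpr ⟨hX0, ?_⟩)
    filter_upwards [self_mem_nhdsWithin] with θ hθ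
    exact Set.mem_compl_singleton_iff.mpr (hXneg θ hθ).ne
  have hYslope : Tendsto (fun θ => (1 - Real.exp (Y θ)) / (-(Y θ)))
      (nhdsWithin 0 (Set.Ioi 0)) (nhds 1) := by
    refine slopeExp.comp (tendsto_nhdsWithin_iff.mpr ⟨hY0, ?_⟩)
    filter_upwards [self_mem_nhdsWithin] with θ hθ
    exact Set.mem_compl_singleton_iff.mpr (hYneg θ hθ).ne
  -- assemble
  have hmain : Tendsto (fun θ =>
      ((1 - Real.exp (X θ)) / (-(X θ)) * (X θ / (-(T θ)))) /
        ((1 - Real.exp (Y θ)) / (-(Y θ)) * (Y θ / (-(T θ)))))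
      (nhdsWithin 0 (Set.Ioi 0)) (nhds 1) := by
    have := (hXslope.mul hXq).div (hYslope.mul hYq) (by norm_num)
    have h11 : (1:ℝ) * 1 / (1 * 1) = 1 := by norm_num
    rw [h11] at this
    exact this
  refine Tendsto.congr' ?_ hmain
  filter_upwards [self_mem_nhdsWithin] with θ hθ
  have hXθ : X θ < 0 := hXneg θ hθ
  have hYθ : Y θ < 0 := hYneg θ hθ
  have hTθ : 0 < T θ := hT θ hθ
  have hey : 1 - Real.exp (Y θ) ≠ 0 := by
    have : Real.exp (Y θ) < 1 := Real.exp_lt_one_iff.mpr hYθ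
    linarith
  have h1 : pm α D lam mu p m θ = Real.exp (X θ) := by
    rw [pm, hXdef, hIdef]
  have h2 : pmT α D lam mu p m θ = Real.exp (Y θ) := by
    rw [pmT, hYdef]
  rw [h1, h2]
  exact ratio_identity (Real.exp (X θ)) (Real.exp (Y θ)) (X θ) (Y θ) (T θ)
    hXθ.ne hYθ.ne hTθ.ne' hey
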